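/- Let λ be a nonzero complex number, β ∈ ℂ[y], and α = (α₁, α₂) ∈ ℂ². Then the operators of Ω(λ,β) induce well-defined ℂ-linear maps L_m, H_m : W_r → W_{r+m} and G_p, Q_p : W_r → W_{r+p} on the weighting W of Ω(λ,β) (r ranging over ℤ ∪ (ℤ + 1/2)), each W_n and W_q is one-dimensional, and the resulting operator family on W satisfies all the relations of the N=1 Heisenberg-Virasoro superalgebra and is isomorphic as a 𝔤-module to the intermediate series module A(β(−α₂) − 1, −α₂, −α₁); explicitly, the grading-preserving linear map sending the class of 1 in W_n to λ^{−n} v_n^+ for n ∈ ℤ and the class of 1 in W_q to λ^{−q+1/2} v_q^- for q ∈ ℤ + 1/2 is a bijection commuting with all operators L_m, H_m, G_p, Q_p. -/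
import Mathlib


open Polynomial

noncomputable section

/-- `ℂ[x,y]`, realized as polynomials in an outer variable `x` (= `X`) with coefficients in
`ℂ[y]`; the inner variable `y` is `C X`.  The same type also models `ℂ[s,t]`. -/
abbrev P2 : Type := Polynomial (Polynomial ℂ)

/-- the polynomial `x` -/
def xP : P2 := Polynomial.X

/-- the polynomial `y` -/
def yP : P2 := Polynomial.C Polynomial.X

/-- multiplication by a fixed polynomial, as a `ℂ`-linear operator on `ℂ[x,y]` -/
def mulOp (a : P2) : P2 →ₗ[ℂ] P2 := LinearMap.mulLeft ℂ a

/-- the substitution `f(x,y) ↦ f(x+c,y)`, as a `ℂ`-linear operator on `ℂ[x,y]` -/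
def shiftOp (c : ℂ) : P2 →ₗ[ℂ] P2 :=
  (Polynomial.taylor (Polynomial.C c)).restrictScalars ℂ

/-- `f(x,y) ↦ λ^m (x + m β(y)) f(x+m, y)` -/
def genL (lam : ℂ) (β : Polynomial ℂ) (m : ℤ) : P2 →ₗ[ℂ] P2 :=
  lam ^ m • (mulOp (xP + Polynomial.C ((m : ℂ) • β)) ∘ₗ shiftOp (m : ℂ))

/-- `f(x,y) ↦ λ^m y f(x+m, y)` -/
def genH (lam : ℂ) (m : ℤ) : P2 →ₗ[ℂ] P2 :=
  lam ^ m • (mulOp yP ∘ₗ shiftOp (m : ℂ))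

/- In everything that follows, the odd (half-integer) index `p ∈ ℤ + 1/2` is encoded by the
integer `k : ℤ` with `p = k + 1/2`. -/

/-- `L_m` on the even part `ℂ[x,y]` of `Ω(λ,β)` -/
def omegaLe (lam : ℂ) (β : Polynomial ℂ) (m : ℤ) : P2 →ₗ[ℂ] P2 := genL lam β m

/-- `L_m` on the odd part `ℂ[s,t]` of `Ω(λ,β)` -/
def omegaLo (lam : ℂ) (β : Polynomial ℂ) (m : ℤ) : P2 →ₗ[ℂ] P2 :=
  genL lam (β + Polynomial.C (1/2)) m

/-- `H_m` on either part of `Ω(λ,β)` -/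
def omegaH (lam : ℂ) (m : ℤ) : P2 →ₗ[ℂ] P2 := genH lam m

/-- `G_{k+1/2} : M₀ → M₁`, `f(x,y) ↦ λ^{p-1/2} f(s+p,t)` -/
def omegaGe (lam : ℂ) (k : ℤ) : P2 →ₗ[ℂ] P2 := lam ^ k • shiftOp ((k : ℂ) + 1/2)

/-- `G_{k+1/2} : M₁ → M₀`, `f(s,t) ↦ λ^{p+1/2} (x + 2p β(y)) f(x+p,y)` -/
def omegaGo (lam : ℂ) (β : Polynomial ℂ) (k : ℤ) : P2 →ₗ[ℂ] P2 :=
  lam ^ (k + 1) • (mulOp (xP + Polynomial.C (((2*k+1 : ℤ) : ℂ) • β)) ∘ₗ shiftOp ((k : ℂ) + 1/2))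

/-- `Q_{k+1/2} : M₀ → M₁` is the zero map -/
def omegaQe (_k : ℤ) : P2 →ₗ[ℂ] P2 := 0

/-- `Q_{k+1/2} : M₁ → M₀`, `f(s,t) ↦ λ^{p+1/2} y f(x+p,y)` -/
def omegaQo (lam : ℂ) (k : ℤ) : P2 →ₗ[ℂ] P2 :=
  lam ^ (k + 1) • (mulOp yP ∘ₗ shiftOp ((k : ℂ) + 1/2))

/-- A representation of the N=1 Heisenberg-Virasoro superalgebra `𝔤` on the `ℤ₂`-graded
complex vector space `M₀ ⊕ M₁`: operators `Le m`/`Lo m` (resp. `He`/`Ho`) are the even/odd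
components of `L_m` (resp. `H_m`), and `Ge k`/`Go k` (resp. `Qe`/`Qo`) are the two components
of the grading-reversing operator `G_{k+1/2}` (resp. `Q_{k+1/2}`); all ten super-bracket
relations are required to hold on both graded components. -/
structure GRep (M₀ M₁ : Type*) [AddCommGroup M₀] [Module ℂ M₀]
    [AddCommGroup M₁] [Module ℂ M₁] where
  Le : ℤ → M₀ →ₗ[ℂ] M₀
  Lo : ℤ → M₁ →ₗ[ℂ] M₁
  He : ℤ → M₀ →ₗ[ℂ] M₀
  Ho : ℤ → M₁ →ₗ[ℂ] M₁
  Ge : ℤ → M₀ →ₗ[ℂ] M₁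
  Go : ℤ → M₁ →ₗ[ℂ] M₀
  Qe : ℤ → M₀ →ₗ[ℂ] M₁
  Qo : ℤ → M₁ →ₗ[ℂ] M₀
  rel_LL_e : ∀ m n : ℤ, Le m ∘ₗ Le n - Le n ∘ₗ Le m = ((m : ℂ) - (n : ℂ)) • Le (m + n)
  rel_LL_o : ∀ m n : ℤ, Lo m ∘ₗ Lo n - Lo n ∘ₗ Lo m = ((m : ℂ) - (n : ℂ)) • Lo (m + n)
  rel_LH_e : ∀ m n : ℤ, Le m ∘ₗ He n - He n ∘ₗ Le m = (-(n : ℂ)) • He (m + n)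
  rel_LH_o : ∀ m n : ℤ, Lo m ∘ₗ Ho n - Ho n ∘ₗ Lo m = (-(n : ℂ)) • Ho (m + n)
  rel_LG_e : ∀ (m k : ℤ),
    Lo m ∘ₗ Ge k - Ge k ∘ₗ Le m = ((m : ℂ)/2 - ((k : ℂ) + 1/2)) • Ge (m + k)
  rel_LG_o : ∀ (m k : ℤ),
    Le m ∘ₗ Go k - Go k ∘ₗ Lo m = ((m : ℂ)/2 - ((k : ℂ) + 1/2)) • Go (m + k)
  rel_LQ_e : ∀ (m k : ℤ),
    Lo m ∘ₗ Qe k - Qe k ∘ₗ Le m = (-((m : ℂ)/2 + ((k : ℂ) + 1/2))) • Qe (m + k)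
  rel_LQ_o : ∀ (m k : ℤ),
    Le m ∘ₗ Qo k - Qo k ∘ₗ Lo m = (-((m : ℂ)/2 + ((k : ℂ) + 1/2))) • Qo (m + k)
  rel_HG_e : ∀ (m k : ℤ), Ho m ∘ₗ Ge k - Ge k ∘ₗ He m = (m : ℂ) • Qe (m + k)
  rel_HG_o : ∀ (m k : ℤ), He m ∘ₗ Go k - Go k ∘ₗ Ho m = (m : ℂ) • Qo (m + k)
  rel_GG_e : ∀ k l : ℤ, Go k ∘ₗ Ge l + Go l ∘ₗ Ge k = (2 : ℂ) • Le (k + l + 1)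
  rel_GG_o : ∀ k l : ℤ, Ge k ∘ₗ Go l + Ge l ∘ₗ Go k = (2 : ℂ) • Lo (k + l + 1)
  rel_GQ_e : ∀ k l : ℤ, Go k ∘ₗ Qe l + Qo l ∘ₗ Ge k = He (k + l + 1)
  rel_GQ_o : ∀ k l : ℤ, Ge k ∘ₗ Qo l + Qe l ∘ₗ Go k = Ho (k + l + 1)
  rel_HH_e : ∀ m n : ℤ, He m ∘ₗ He n = He n ∘ₗ He m
  rel_HH_o : ∀ m n : ℤ, Ho m ∘ₗ Ho n = Ho n ∘ₗ Ho m
  rel_HQ_e : ∀ (m k : ℤ), Ho m ∘ₗ Qe k = Qe k ∘ₗ He m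
  rel_HQ_o : ∀ (m k : ℤ), He m ∘ₗ Qo k = Qo k ∘ₗ Ho m
  rel_QQ_e : ∀ k l : ℤ, Qo k ∘ₗ Qe l + Qo l ∘ₗ Qe k = 0
  rel_QQ_o : ∀ k l : ℤ, Qe k ∘ₗ Qo l + Qe l ∘ₗ Qo k = 0

/-- evaluation of a two-variable polynomial (an element of `P2`, outer variable ↦ `A`,
inner variable ↦ `B`) at a pair of commuting operators -/
def eval2End {V : Type*} [AddCommGroup V] [Module ℂ V] (A B : Module.End ℂ V)
    (f : P2) : Module.End ℂ V :=
  Polynomial.eval₂ (Polynomial.aeval B).toRingHom A f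

/-- multiplication by a fixed polynomial on `ℂ[x]` -/
def mul1 (a : Polynomial ℂ) : Polynomial ℂ →ₗ[ℂ] Polynomial ℂ := LinearMap.mulLeft ℂ a

/-- the substitution `f(x) ↦ f(x+c)` on `ℂ[x]` -/
def tay (c : ℂ) : Polynomial ℂ →ₗ[ℂ] Polynomial ℂ := Polynomial.taylor c

/-- `f(x) ↦ λ^m (x + m c) f(x+m)` -/
def phiL (lam c : ℂ) (m : ℤ) : Polynomial ℂ →ₗ[ℂ] Polynomial ℂ :=
  lam ^ m • (mul1 (Polynomial.X + Polynomial.C ((m : ℂ) * c)) ∘ₗ tay (m : ℂ))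

/-- `f(x) ↦ λ^m b f(x+m)` -/
def phiH (lam b : ℂ) (m : ℤ) : Polynomial ℂ →ₗ[ℂ] Polynomial ℂ :=
  (lam ^ m * b) • tay (m : ℂ)

/-- `f(x) ↦ λ^{p-1/2} f(s+p)`, `p = k + 1/2` -/
def phiGe (lam : ℂ) (k : ℤ) : Polynomial ℂ →ₗ[ℂ] Polynomial ℂ :=
  lam ^ k • tay ((k : ℂ) + 1/2)

/-- `f(s) ↦ λ^{p+1/2} (x + 2 p c) f(x+p)`, `p = k + 1/2` -/
def phiGo (lam c : ℂ) (k : ℤ) : Polynomial ℂ →ₗ[ℂ] Polynomial ℂ :=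
  lam ^ (k + 1) • (mul1 (Polynomial.X + Polynomial.C (((2*k+1 : ℤ) : ℂ) * c)) ∘ₗ tay ((k : ℂ) + 1/2))

/-- `f(s) ↦ λ^{p+1/2} b f(x+p)`, `p = k + 1/2` -/
def phiQo (lam b : ℂ) (k : ℤ) : Polynomial ℂ →ₗ[ℂ] Polynomial ℂ :=
  (lam ^ (k + 1) * b) • tay ((k : ℂ) + 1/2)

/-- one graded component of `R_g`, i.e. `g(y)ℂ[x,y]` (equivalently `g(t)ℂ[s,t]`) -/
def Rg (g : Polynomial ℂ) : Submodule ℂ P2 := LinearMap.range (mulOp (Polynomial.C g))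

/-- the even component of `S_g`, i.e. `g(y)(xℂ[x,y] + yℂ[x,y])` -/
def Sg (g : Polynomial ℂ) : Submodule ℂ P2 :=
  LinearMap.range (mulOp (xP * Polynomial.C g)) ⊔ LinearMap.range (mulOp (yP * Polynomial.C g))

/-- the embedding `ℂ[x] → ℂ[x,y]` -/
def embX (f : Polynomial ℂ) : P2 := f.map Polynomial.C

/-- `f(x) ↦` class of `g'(y)·f(x)` in `ℂ[x,y]/R_g` -/
def psiMap (g g' : Polynomial ℂ) (f : Polynomial ℂ) : P2 ⧸ Rg g :=
  (Rg g).mkQ (Polynomial.C g' * embX f)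


/-- the maximal ideal `(x + n + α₁, y + α₂)` of `ℂ[x,y]`, as a `ℂ`-subspace -/
def idealE (α₁ α₂ : ℂ) (n : ℤ) : Submodule ℂ P2 :=
  LinearMap.range (mulOp (xP + Polynomial.C (Polynomial.C ((n : ℂ) + α₁)))) ⊔
  LinearMap.range (mulOp (Polynomial.C (Polynomial.X + Polynomial.C α₂)))

/-- the maximal ideal `(s + q + α₁, t + α₂)` of `ℂ[s,t]`, `q = j + 1/2` -/
def idealO (α₁ α₂ : ℂ) (j : ℤ) : Submodule ℂ P2 :=
  LinearMap.range (mulOp (xP + Polynomial.C (Polynomial.C ((j : ℂ) + 1/2 + α₁)))) ⊔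
  LinearMap.range (mulOp (Polynomial.C (Polynomial.X + Polynomial.C α₂)))

namespace S19

/-- evaluation of `f ∈ ℂ[x,y]` at `(a,b)` -/
def ev (a b : ℂ) : P2 →+* ℂ :=
  Polynomial.eval₂RingHom (Polynomial.evalRingHom b) a

lemma ev_smul (a b c : ℂ) (f : P2) : ev a b (c • f) = c * ev a b f := by
  have h : c • f = (c • (1 : Polynomial ℂ)) • f := (smul_one_smul _ c f).symm
  rw [h, ev, coe_eval₂RingHom, eval₂_smul]
  simp

/-- evaluation as a `ℂ`-linear map -/
def evL (a b : ℂ) : P2 →ₗ[ℂ] ℂ :=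
  { toFun := ev a b, map_add' := map_add _, map_smul' := ev_smul a b }

@[simp] lemma evL_apply (a b : ℂ) (f : P2) : evL a b f = ev a b f := rfl

@[simp] lemma ev_X (a b : ℂ) : ev a b Polynomial.X = a := eval₂_X _ _
@[simp] lemma ev_C (a b : ℂ) (p : Polynomial ℂ) : ev a b (Polynomial.C p) = p.eval b :=
  eval₂_C _ _
@[simp] lemma ev_one (a b : ℂ) : ev a b 1 = 1 := map_one _
@[simp] lemma ev_xP (a b : ℂ) : ev a b xP = a := eval₂_X _ _
@[simp] lemma ev_yP (a b : ℂ) : ev a b yP = b := by simp [yP]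

lemma ev_shift (a b c : ℂ) (f : P2) : ev a b (shiftOp c f) = ev (a + c) b f := by
  rw [shiftOp, LinearMap.restrictScalars_apply, taylor_apply, ev, coe_eval₂RingHom,
    eval₂_comp]
  congr 1
  simp

lemma ev_eq_eval (a b : ℂ) (f : P2) : ev a b f = (f.eval (Polynomial.C a)).eval b := by
  have h := Polynomial.hom_eval₂ (p := f) (f := RingHom.id (Polynomial ℂ))
    (g := Polynomial.evalRingHom b) (x := Polynomial.C a)
  simp only [RingHom.comp_id, coe_evalRingHom, eval_C] at h
  rw [ev, coe_eval₂RingHom, ← h]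
  rfl

lemma ideal_eq (a b : ℂ) :
    LinearMap.range (mulOp (xP + Polynomial.C (Polynomial.C (-a)))) ⊔
      LinearMap.range (mulOp (Polynomial.C (Polynomial.X + Polynomial.C (-b))))
      = LinearMap.ker (evL a b) := by
  apply le_antisymm
  · apply sup_le
    · rintro _ ⟨g, rfl⟩
      simp [LinearMap.mem_ker, mulOp, LinearMap.mulLeft_apply, map_mul]
    · rintro _ ⟨g, rfl⟩
      simp [LinearMap.mem_ker, mulOp, LinearMap.mulLeft_apply, map_mul]
  · intro f hf
    have hf' : ev a b f = 0 := hf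
    set g : Polynomial ℂ := f.eval (Polynomial.C a) with hg
    have hgb : g.eval b = 0 := by rw [← ev_eq_eval]; exact hf'
    obtain ⟨q1, hq1⟩ : xP + Polynomial.C (Polynomial.C (-a)) ∣ f - Polynomial.C g := by
      have := Polynomial.X_sub_C_dvd_sub_C_eval (a := (Polynomial.C a : Polynomial ℂ)) (p := f)
      simpa [xP, sub_eq_add_neg, map_neg] using this
    obtain ⟨q2, hq2⟩ : (Polynomial.X + Polynomial.C (-b) : Polynomial ℂ) ∣ g := by
      have := Polynomial.X_sub_C_dvd_sub_C_eval (a := b) (p := g)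
      rw [hgb, map_zero, sub_zero] at this
      simpa [sub_eq_add_neg] using this
    have hsum : f = (xP + Polynomial.C (Polynomial.C (-a))) * q1 +
        Polynomial.C (Polynomial.X + Polynomial.C (-b)) * Polynomial.C q2 := by
      rw [← map_mul, ← hq2, ← hq1]; ring
    rw [hsum]
    exact Submodule.add_mem_sup ⟨q1, rfl⟩ ⟨Polynomial.C q2, rfl⟩

lemma ev_surj (a b : ℂ) : Function.Surjective (evL a b) :=
  fun z => ⟨Polynomial.C (Polynomial.C z), by simp⟩

lemma finrank_ker (a b : ℂ) : Module.finrank ℂ (P2 ⧸ LinearMap.ker (evL a b)) = 1 := by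
  rw [LinearEquiv.finrank_eq ((evL a b).quotKerEquivOfSurjective (ev_surj a b)),
    Module.finrank_self]

lemma mkQ_one_ne (a b : ℂ) : (LinearMap.ker (evL a b)).mkQ 1 ≠ 0 := by
  rw [Submodule.mkQ_apply, ne_eq, Submodule.Quotient.mk_eq_zero, LinearMap.mem_ker]
  simp

lemma mkQ_eq (a b : ℂ) (u : P2) :
    (LinearMap.ker (evL a b)).mkQ u = ev a b u • (LinearMap.ker (evL a b)).mkQ 1 := by
  rw [← map_smul, ← sub_eq_zero, ← map_sub, Submodule.mkQ_apply,
    Submodule.Quotient.mk_eq_zero, LinearMap.mem_ker]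
  simp [ev_smul, mul_comm]

lemma ev_op (a b c s : ℂ) (g f : P2) :
    ev a b ((s • (mulOp g ∘ₗ shiftOp c)) f) = s * (ev a b g * ev (a + c) b f) := by
  rw [LinearMap.smul_apply, ev_smul, LinearMap.comp_apply, mulOp, LinearMap.mulLeft_apply,
    map_mul, ev_shift]

end S19

/-- (Theorem 6.4) The operators of `Ω(λ,β)` descend to well-defined maps
`W_r → W_{r+m}` (resp. `W_r → W_{r+p}`) between the weight spaces
`W_n = ℂ[x,y]/(x+n+α₁, y+α₂)` and `W_q = ℂ[s,t]/(s+q+α₁, t+α₂)` of the weighting functor;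
each weight space is one-dimensional, spanned by the class of `1`; and the resulting
`𝔤`-module is isomorphic to the intermediate series module
`A(β(-α₂)-1, -α₂, -α₁)`, via the grading-preserving bijection `class of 1 in W_n ↦ λ^{-n}v_n^+`,
`class of 1 in W_q ↦ λ^{-q+1/2}v_q^-`: on the spanning classes of `1` the induced operators
act by exactly the coefficients of `A(β(-α₂)-1, -α₂, -α₁)` transported through this bijection.
(Odd indices are encoded by `j : ℤ` with `q = j + 1/2`, `p = k + 1/2`.) -/
theorem statement19 (lam : ℂ) (hlam : lam ≠ 0) (β : Polynomial ℂ) (α₁ α₂ : ℂ) :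
    -- the operators descend to maps `W_r → W_{r+m}`, `W_r → W_{r+p}`
    (∀ (m n : ℤ), ∀ v ∈ idealE α₁ α₂ n, omegaLe lam β m v ∈ idealE α₁ α₂ (n + m)) ∧
    (∀ (m j : ℤ), ∀ v ∈ idealO α₁ α₂ j, omegaLo lam β m v ∈ idealO α₁ α₂ (j + m)) ∧
    (∀ (m n : ℤ), ∀ v ∈ idealE α₁ α₂ n, omegaH lam m v ∈ idealE α₁ α₂ (n + m)) ∧
    (∀ (m j : ℤ), ∀ v ∈ idealO α₁ α₂ j, omegaH lam m v ∈ idealO α₁ α₂ (j + m)) ∧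
    (∀ (k n : ℤ), ∀ v ∈ idealE α₁ α₂ n, omegaGe lam k v ∈ idealO α₁ α₂ (n + k)) ∧
    (∀ (k j : ℤ), ∀ v ∈ idealO α₁ α₂ j, omegaGo lam β k v ∈ idealE α₁ α₂ (j + k + 1)) ∧
    (∀ (k n : ℤ), ∀ v ∈ idealE α₁ α₂ n, omegaQe k v ∈ idealO α₁ α₂ (n + k)) ∧
    (∀ (k j : ℤ), ∀ v ∈ idealO α₁ α₂ j, omegaQo lam k v ∈ idealE α₁ α₂ (j + k + 1)) ∧
    -- each weight space is one-dimensional, spanned by the class of `1`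
    (∀ n : ℤ, Module.finrank ℂ (P2 ⧸ idealE α₁ α₂ n) = 1) ∧
    (∀ j : ℤ, Module.finrank ℂ (P2 ⧸ idealO α₁ α₂ j) = 1) ∧
    (∀ n : ℤ, (idealE α₁ α₂ n).mkQ 1 ≠ 0) ∧
    (∀ j : ℤ, (idealO α₁ α₂ j).mkQ 1 ≠ 0) ∧
    -- under `class of 1 in W_n ↦ λ^{-n} v_n^+`, `class of 1 in W_{j+1/2} ↦ λ^{-j} v_{j+1/2}^-`,
    -- the induced operators match those of `A(a,b,c)`, `a = β(-α₂)-1`, `b = -α₂`, `c = -α₁`: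
    (∀ m n : ℤ, (idealE α₁ α₂ (n + m)).mkQ (omegaLe lam β m 1)
      = (lam ^ m * ((-α₁ - (n : ℂ)) + (m : ℂ) * (β.eval (-α₂) - 1)))
          • (idealE α₁ α₂ (n + m)).mkQ 1) ∧
    (∀ m j : ℤ, (idealO α₁ α₂ (j + m)).mkQ (omegaLo lam β m 1)
      = (lam ^ m * ((-α₁ - ((j : ℂ) + 1/2)) + (m : ℂ) * (β.eval (-α₂) - 1/2)))
          • (idealO α₁ α₂ (j + m)).mkQ 1) ∧
    (∀ m n : ℤ, (idealE α₁ α₂ (n + m)).mkQ (omegaH lam m 1)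
      = (lam ^ m * (-α₂)) • (idealE α₁ α₂ (n + m)).mkQ 1) ∧
    (∀ m j : ℤ, (idealO α₁ α₂ (j + m)).mkQ (omegaH lam m 1)
      = (lam ^ m * (-α₂)) • (idealO α₁ α₂ (j + m)).mkQ 1) ∧
    (∀ k n : ℤ, (idealO α₁ α₂ (n + k)).mkQ (omegaGe lam k 1)
      = (lam ^ k) • (idealO α₁ α₂ (n + k)).mkQ 1) ∧
    (∀ k j : ℤ, (idealE α₁ α₂ (j + k + 1)).mkQ (omegaGo lam β k 1)
      = (lam ^ (k + 1) * ((-α₁ - ((j : ℂ) + 1/2))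
          + ((k : ℂ) + 1/2) * (2 * β.eval (-α₂) - 1)))
          • (idealE α₁ α₂ (j + k + 1)).mkQ 1) ∧
    (∀ k n : ℤ, (idealO α₁ α₂ (n + k)).mkQ (omegaQe k 1) = 0) ∧
    (∀ k j : ℤ, (idealE α₁ α₂ (j + k + 1)).mkQ (omegaQo lam k 1)
      = (lam ^ (k + 1) * (-α₂)) • (idealE α₁ α₂ (j + k + 1)).mkQ 1) := by
  open S19 in
  have hE : ∀ n : ℤ, idealE α₁ α₂ n = LinearMap.ker (evL (-((n : ℂ) + α₁)) (-α₂)) := by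
    intro n
    have h := ideal_eq (-((n : ℂ) + α₁)) (-α₂)
    simpa [idealE, neg_neg] using h
  have hO : ∀ j : ℤ, idealO α₁ α₂ j = LinearMap.ker (evL (-((j : ℂ) + 1/2 + α₁)) (-α₂)) := by
    intro j
    have h := ideal_eq (-((j : ℂ) + 1/2 + α₁)) (-α₂)
    simpa [idealO, neg_neg] using h
  -- descent lemma for operators of shape `s • (mulOp g ∘ₗ shiftOp c)`
  have key : ∀ (a b c s : ℂ) (g v : P2), ev (a + c) (b) v = 0 →
      (s • (mulOp g ∘ₗ shiftOp c)) v ∈ LinearMap.ker (evL a b) := by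
    intro a b c s g v hv
    rw [LinearMap.mem_ker, evL_apply, ev_op, hv, mul_zero, mul_zero]
  refine ⟨?_, ?_, ?_, ?_, ?_, ?_, ?_, ?_, ?_, ?_, ?_, ?_, ?_, ?_, ?_, ?_, ?_, ?_, ?_, ?_⟩
  · -- Le descent
    intro m n v hv
    rw [hE] at hv ⊢
    have hv' : ev (-((↑(n + m) : ℂ) + α₁) + (m : ℂ)) (-α₂) v = 0 := by
      have : (-((↑(n + m) : ℂ) + α₁) + (m : ℂ)) = -((n : ℂ) + α₁) := by push_cast; ring
      rw [this]; exact hv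
    exact key _ _ _ _ _ _ hv'
  · -- Lo descent
    intro m j v hv
    rw [hO] at hv ⊢
    have hv' : ev (-((↑(j + m) : ℂ) + 1/2 + α₁) + (m : ℂ)) (-α₂) v = 0 := by
      have : (-((↑(j + m) : ℂ) + 1/2 + α₁) + (m : ℂ)) = -((j : ℂ) + 1/2 + α₁) := by
        push_cast; ring
      rw [this]; exact hv
    exact key _ _ _ _ _ _ hv'
  · -- He descent
    intro m n v hv
    rw [hE] at hv ⊢
    have hv' : ev (-((↑(n + m) : ℂ) + α₁) + (m : ℂ)) (-α₂) v = 0 := by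
      have : (-((↑(n + m) : ℂ) + α₁) + (m : ℂ)) = -((n : ℂ) + α₁) := by push_cast; ring
      rw [this]; exact hv
    exact key _ _ _ _ _ _ hv'
  · -- Ho descent
    intro m j v hv
    rw [hO] at hv ⊢
    have hv' : ev (-((↑(j + m) : ℂ) + 1/2 + α₁) + (m : ℂ)) (-α₂) v = 0 := by
      have : (-((↑(j + m) : ℂ) + 1/2 + α₁) + (m : ℂ)) = -((j : ℂ) + 1/2 + α₁) := by
        push_cast; ring
      rw [this]; exact hv
    exact key _ _ _ _ _ _ hv'
  · -- Ge descent
    intro k n v hv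
    rw [hE] at hv
    rw [hO, LinearMap.mem_ker]
    rw [omegaGe, LinearMap.smul_apply, evL_apply, ev_smul, ev_shift]
    have h2 : (-((↑(n + k) : ℂ) + 1/2 + α₁) + ((k : ℂ) + 1/2)) = -((n : ℂ) + α₁) := by
      push_cast; ring
    have hv0 : ev (-((n : ℂ) + α₁)) (-α₂) v = 0 := hv
    rw [h2, hv0, mul_zero]
  · -- Go descent
    intro k j v hv
    rw [hO] at hv
    rw [hE]
    have hv' : ev (-((↑(j + k + 1) : ℂ) + α₁) + ((k : ℂ) + 1/2)) (-α₂) v = 0 := by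
      have : (-((↑(j + k + 1) : ℂ) + α₁) + ((k : ℂ) + 1/2)) = -((j : ℂ) + 1/2 + α₁) := by
        push_cast; ring
      rw [this]; exact hv
    exact key _ _ _ _ _ _ hv'
  · -- Qe descent
    intro k n v _
    simp [omegaQe]
  · -- Qo descent
    intro k j v hv
    rw [hO] at hv
    rw [hE]
    have hv' : ev (-((↑(j + k + 1) : ℂ) + α₁) + ((k : ℂ) + 1/2)) (-α₂) v = 0 := by
      have : (-((↑(j + k + 1) : ℂ) + α₁) + ((k : ℂ) + 1/2)) = -((j : ℂ) + 1/2 + α₁) := by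
        push_cast; ring
      rw [this]; exact hv
    exact key _ _ _ _ _ _ hv'
  · intro n; rw [hE]; exact finrank_ker _ _
  · intro j; rw [hO]; exact finrank_ker _ _
  · intro n; rw [hE]; exact mkQ_one_ne _ _
  · intro j; rw [hO]; exact mkQ_one_ne _ _
  · -- Le action on 1
    intro m n
    rw [hE, mkQ_eq]
    congr 1
    rw [omegaLe, genL, ev_op, map_one, mul_one]
    simp only [map_add, ev_xP, ev_C, eval_add, eval_smul, eval_C, smul_eq_mul]
    push_cast
    ring
  · -- Lo action on 1
    intro m j
    rw [hO, mkQ_eq]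
    congr 1
    rw [omegaLo, genL, ev_op, map_one, mul_one]
    simp only [map_add, ev_xP, ev_C, eval_add, eval_smul, eval_C, smul_eq_mul]
    push_cast
    ring
  · -- He action on 1
    intro m n
    rw [hE, mkQ_eq]
    congr 1
    rw [omegaH, genH, ev_op]
    simp
  · -- Ho action on 1
    intro m j
    rw [hO, mkQ_eq]
    congr 1
    rw [omegaH, genH, ev_op]
    simp
  · -- Ge action on 1
    intro k n
    rw [hO, mkQ_eq]
    congr 1
    rw [omegaGe, LinearMap.smul_apply, ev_smul, ev_shift]
    simp [smul_eq_mul]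
  · -- Go action on 1
    intro k j
    rw [hE, mkQ_eq]
    congr 1
    rw [omegaGo, ev_op, map_one, mul_one]
    simp only [map_add, ev_xP, ev_C, eval_add, eval_smul, eval_C, smul_eq_mul]
    push_cast
    ring
  · -- Qe action on 1
    intro k n
    simp [omegaQe]
  · -- Qo action on 1
    intro k j
    rw [hE, mkQ_eq]
    congr 1
    rw [omegaQo, ev_op]
    simp
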